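/- Fix a constant δ ∈ (0,1) and let F_δ be the family of all tampering functions f : {0,1}^n → {0,1}^n such that every output bit of f depends on at most ⌊δn⌋ of the input bits. For every constant γ > 0 there exist a constant ε_0 > 0 and n_0 such that for all n ≥ n_0: any coding scheme with block length n that is non-malleable with respect to F_δ with error ε ≤ ε_0 has rate at most 1 − δ + γ. -/

import Mathlib

open Finset

/-- Bit strings of length `n`, i.e. `{0,1}^n`. -/
abbrev Word (n : ℕ) := Fin n → Bool

/-- Messages of length `k`, i.e. `{0,1}^k`. -/
abbrev Msg (k : ℕ) := Fin k → Bool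

/-- Values in `{0,1}^k ∪ {⊥, same}`: `none` = `same`, `some none` = `⊥`,
`some (some s)` = the message `s`. -/
abbrev NMVal (k : ℕ) := Option (Option (Msg k))

/-- `copy x s = s` if `x = same`, and `copy x s = x` otherwise. -/
def copyFn {k : ℕ} (x : NMVal k) (s : Msg k) : Option (Msg k) := x.getD (some s)

/-- Statistical (total variation) distance between two mass functions on a finite set. -/
noncomputable def statDist {α : Type*} [Fintype α] (P Q : α → ℝ) : ℝ :=
  (∑ x, |P x - Q x|) / 2

/-- A probability mass function on a finite set. -/
def IsDist {α : Type*} [Fintype α] (D : α → ℝ) : Prop :=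
  (∀ a, 0 ≤ D a) ∧ ∑ a, D a = 1

/-- A coding scheme with block length `n` and message length `k`: a randomized
encoder `enc` (given as the probability mass function of `Enc(s)`) and a
deterministic decoder `dec` (`none` = `⊥`) such that `Dec(Enc(s)) = s` always. -/
structure CodingScheme (n k : ℕ) where
  enc : Msg k → Word n → ℝ
  dec : Word n → Option (Msg k)
  enc_nonneg : ∀ s x, 0 ≤ enc s x
  enc_sum : ∀ s, ∑ x, enc s x = 1
  dec_enc : ∀ s x, 0 < enc s x → dec x = some s

/-- The distribution of `Dec(f(Enc(s)))`. -/
noncomputable def decDist {n k : ℕ} (C : CodingScheme n k)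
    (f : Word n → Word n) (s : Msg k) : Option (Msg k) → ℝ :=
  fun y => ∑ x, if C.dec (f x) = y then C.enc s x else 0

/-- The distribution of `copy(S', s)` for `S' ~ D`. -/
noncomputable def copyDist {k : ℕ} (D : NMVal k → ℝ) (s : Msg k) : Option (Msg k) → ℝ :=
  fun y => ∑ v, if copyFn v s = y then D v else 0

/-- The distribution `D_{f,s}` of the random variable that equals `same` if
`f(Enc(s)) = Enc(s)` and `Dec(f(Enc(s)))` otherwise. -/
noncomputable def tamperDist {n k : ℕ} (C : CodingScheme n k)
    (f : Word n → Word n) (s : Msg k) : NMVal k → ℝ :=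
  fun v => ∑ x, if (if f x = x then (none : NMVal k) else some (C.dec (f x))) = v
    then C.enc s x else 0

/-- Non-malleability of a coding scheme w.r.t. a family `F` with error `ε`. -/
def NonMalleable {n k : ℕ} (C : CodingScheme n k)
    (F : Set (Word n → Word n)) (ε : ℝ) : Prop :=
  ∀ f ∈ F, ∃ D : NMVal k → ℝ, IsDist D ∧
    ∀ s : Msg k, statDist (decDist C f s) (copyDist D s) ≤ ε

/-- Strong non-malleability of a coding scheme w.r.t. a family `F` with error `ε`. -/
def StronglyNonMalleable {n k : ℕ} (C : CodingScheme n k)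
    (F : Set (Word n → Word n)) (ε : ℝ) : Prop :=
  ∀ f ∈ F, ∀ s₁ s₂ : Msg k, s₁ ≠ s₂ →
    statDist (tamperDist C f s₁) (tamperDist C f s₂) ≤ ε

/-- Hamming weight of a word. -/
def hammingWt {n : ℕ} (x : Word n) : ℕ := (univ.filter (fun i => x i = true)).card

/-- The coding scheme has relative distance `δ`: any offset of a codeword by a
nonzero `Δ` of Hamming weight at most `δn` is rejected by the decoder. -/
def HasRelDist {n k : ℕ} (C : CodingScheme n k) (δ : ℝ) : Prop :=
  ∀ s x, 0 < C.enc s x → ∀ Δ : Word n, Δ ≠ (fun _ => false) →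
    (hammingWt Δ : ℝ) ≤ δ * n → C.dec (fun i => xor (x i) (Δ i)) = none

/-- The binary entropy function (logs base 2). -/
noncomputable def binEnt (δ : ℝ) : ℝ :=
  -(δ * Real.logb 2 δ) - (1 - δ) * Real.logb 2 (1 - δ)

/-- The family `F_δ` of tampering functions on `{0,1}^n` in which every output bit
depends on at most `⌊δn⌋` input bits. -/
def LocalFam (n : ℕ) (δ : ℝ) : Set (Word n → Word n) :=
  {f | ∀ i : Fin n, ∃ B : Finset (Fin n), B.card ≤ ⌊δ * (n : ℝ)⌋₊ ∧
    ∀ x y : Word n, (∀ j ∈ B, x j = y j) → f x i = f y i}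

/-!
Let `S` be a set of `⌊δn⌋` coordinates and `V` a set of `S`-patterns. The tampering function
that keeps a word whose `S`-pattern lies in `V` and otherwise erases its `S`-coordinates is
`⌊δn⌋`-local. Fix a message `s` such that `Enc s` with `S` erased rarely decodes to `s`; one
exists by averaging, since erased words take only `2^(n-|S|)` values. Let `V` be the `S`-patterns
of the codewords of a message `i ≠ s` that `Enc s` with `S` erased also rarely decodes to. Then
`Enc i` always survives the tampering while `Enc s` is rarely tampered into `i`, so the simulator
puts almost all of its mass on `same`; hence the `S`-pattern of `Enc s` lies in `V` with
probability close to `1`. But an `S`-pattern is shared by at most `2^(n-|S|)` messages, so if the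
rate exceeds `1 - δ + γ`, counting tuples yields `ℓ = O(1/γ)` such messages `i` whose pattern sets
have no common point, and the union bound over them gives a contradiction.
-/

theorem abs_sub_le_two_mul_statDist {α : Type*} [Fintype α] (P Q : α → ℝ) (a : α) :
    |P a - Q a| ≤ 2 * statDist P Q := by
  have := single_le_sum (f := fun x => |P x - Q x|) (fun x _ => abs_nonneg _) (mem_univ a)
  rw [statDist]
  linarith

theorem card_le_card_filter_ne_and_le_add {α : Type*} [Fintype α] [DecidableEq α]
    {a : α → ℝ} (ha : ∀ u, 0 ≤ a u) (hsum : ∑ u, a u ≤ 1) {N : ℝ} (hN : 0 < N) (s : α) :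
    (Fintype.card α : ℝ) ≤ #{u | u ≠ s ∧ a u ≤ 1 / N} + N + 1 := by
  have hmarkov : (#{u | 1 / N < a u} : ℝ) * (1 / N) ≤ 1 :=
    calc (#{u | 1 / N < a u} : ℝ) * (1 / N) = ∑ u with 1 / N < a u, 1 / N := by simp
      _ ≤ ∑ u with 1 / N < a u, a u := sum_le_sum fun u hu => (mem_filter.1 hu).2.le
      _ ≤ ∑ u, a u := sum_le_sum_of_subset_of_nonneg (filter_subset _ _) fun u _ _ => ha u
      _ ≤ 1 := hsum
  have hheavy : (#{u | 1 / N < a u} : ℝ) ≤ N := by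
    rwa [← div_eq_mul_one_div, div_le_one hN] at hmarkov
  have hsub : ({u | ¬(u ≠ s ∧ a u ≤ 1 / N)} : Finset α) ⊆
      insert s (univ.filter fun u => 1 / N < a u) := by
    intro u hu
    simp only [mem_filter, mem_univ, true_and, not_and_or, not_not, not_le] at hu
    simpa using hu
  have hcompl : Fintype.card α ≤ #{u | u ≠ s ∧ a u ≤ 1 / N} + (#{u | 1 / N < a u} + 1) := by
    rw [← card_univ, ← card_filter_add_card_filter_not (fun u => u ≠ s ∧ a u ≤ 1 / N)]
    exact Nat.add_le_add_left ((card_le_card hsub).trans (card_insert_le _ _)) _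
  have hcompl' : (Fintype.card α : ℝ) ≤
      #{u | u ≠ s ∧ a u ≤ 1 / N} + (#{u | 1 / N < a u} + 1) := by
    exact_mod_cast hcompl
  linarith

theorem sum_le_sum_sum_filter_of_forall_exists {α ι : Type*} [Fintype α] [Fintype ι]
    {f : α → ℝ} (hf : ∀ x, 0 ≤ f x) (p : ι → α → Prop) [∀ j, DecidablePred (p j)]
    (hp : ∀ x, ∃ j, p j x) : ∑ x, f x ≤ ∑ j, ∑ x with p j x, f x := by
  simp_rw [sum_filter]
  rw [sum_comm]
  refine sum_le_sum fun x _ => ?_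
  obtain ⟨j, hj⟩ := hp x
  calc f x = if p j x then f x else 0 := (if_pos hj).symm
    _ ≤ ∑ j, if p j x then f x else 0 :=
      single_le_sum (f := fun j => if p j x then f x else 0)
        (fun j _ => by split_ifs <;> simp [hf]) (mem_univ j)

theorem exists_tuple_forall_exists_notMem {α β : Type*} [DecidableEq α] [DecidableEq β]
    (T : α → Finset β) (G : Finset α) (Y : Finset β) {c ℓ : ℕ}
    (hc : ∀ y ∈ Y, #{a ∈ G | y ∈ T a} ≤ c) (hlt : #Y * c ^ ℓ < #G ^ ℓ) :
    ∃ a : Fin ℓ → α, (∀ j, a j ∈ G) ∧ ∀ y ∈ Y, ∃ j, y ∉ T (a j) := by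
  set bad := Y.biUnion fun y => Fintype.piFinset fun _ : Fin ℓ => {a ∈ G | y ∈ T a}
  have hcard : #bad < #(Fintype.piFinset fun _ : Fin ℓ => G) := by
    refine (card_biUnion_le_card_mul _ _ _ fun y hy => ?_).trans_lt (by simpa using hlt)
    simpa using Nat.pow_le_pow_left (hc y hy) ℓ
  obtain ⟨a, ha, hbad⟩ := exists_mem_notMem_of_card_lt_card hcard
  refine ⟨a, Fintype.mem_piFinset.1 ha, fun y hy => ?_⟩
  by_contra! h
  exact hbad (mem_biUnion.2 ⟨y, hy, Fintype.mem_piFinset.2 fun j =>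
    mem_filter.2 ⟨Fintype.mem_piFinset.1 ha j, h j⟩⟩)

section Mask

variable {ι : Type*} [DecidableEq ι]

def mask (S : Finset ι) (x : ι → Bool) : ι → Bool := fun i => if i ∈ S then x i else false

theorem mask_apply_of_mem {S : Finset ι} {i : ι} (hi : i ∈ S) (x : ι → Bool) :
    mask S x i = x i := if_pos hi

theorem mask_apply_of_notMem {S : Finset ι} {i : ι} (hi : i ∉ S) (x : ι → Bool) :
    mask S x i = false := if_neg hi

theorem mask_eq_mask_of_eqOn {S : Finset ι} {x y : ι → Bool} (h : ∀ i ∈ S, x i = y i) :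
    mask S x = mask S y := by
  funext i
  by_cases hi : i ∈ S <;> simp [mask, hi, h]

theorem card_image_mask_le [Fintype ι] (S : Finset ι) : #(univ.image (mask S)) ≤ 2 ^ #S := by
  have hfactor : univ.image (mask S) =
      (univ.image fun (x : ι → Bool) (i : S) => x i).image
        fun r i => if h : i ∈ S then r ⟨i, h⟩ else false := by
    rw [image_image]; rfl
  rw [hfactor]
  refine card_image_le.trans ((card_le_univ _).trans ?_)
  simp

theorem injOn_mask_compl [Fintype ι] (S : Finset ι) (y : ι → Bool) :
    Set.InjOn (mask Sᶜ) {x | mask S x = y} := by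
  intro x hx x' hx' h
  funext i
  by_cases hi : i ∈ S
  · simpa [mask_apply_of_mem hi, hx'] using congrFun (hx.trans hx'.symm) i
  · simpa [mask_apply_of_mem (mem_compl.2 hi)] using congrFun h i

theorem card_filter_mask_eq_le [Fintype ι] (S : Finset ι) (y : ι → Bool) :
    #{x | mask S x = y} ≤ 2 ^ #Sᶜ := by
  calc #{x | mask S x = y} = #((univ.filter fun x => mask S x = y).image (mask Sᶜ)) :=
        (card_image_of_injOn (by simpa using injOn_mask_compl S y)).symm
    _ ≤ #(univ.image (mask Sᶜ)) := card_le_card (image_subset_image (subset_univ _))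
    _ ≤ 2 ^ #Sᶜ := card_image_mask_le Sᶜ

end Mask

section Tampering

variable {n k : ℕ}

def patternTamper (S : Finset (Fin n)) (V : Finset (Word n)) (x : Word n) : Word n :=
  if mask S x ∈ V then x else mask Sᶜ x

theorem patternTamper_apply_of_notMem {S : Finset (Fin n)} {i : Fin n} (hi : i ∉ S)
    (V : Finset (Word n)) (x : Word n) : patternTamper S V x i = x i := by
  unfold patternTamper
  split_ifs
  · rfl
  · exact mask_apply_of_mem (mem_compl.2 hi) x

theorem patternTamper_mem_localFam {δ : ℝ} {S : Finset (Fin n)} (hS : #S ≤ ⌊δ * n⌋₊)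
    (hδn : 1 ≤ ⌊δ * n⌋₊) (V : Finset (Word n)) : patternTamper S V ∈ LocalFam n δ := by
  intro i
  by_cases hi : i ∈ S
  · refine ⟨S, hS, fun x y hxy => ?_⟩
    have hmask : mask S x = mask S y := mask_eq_mask_of_eqOn hxy
    have hout : i ∉ Sᶜ := notMem_compl.2 hi
    unfold patternTamper
    rw [hmask]
    split_ifs
    · exact hxy i hi
    · rw [mask_apply_of_notMem hout, mask_apply_of_notMem hout]
  · refine ⟨{i}, by simpa using hδn, fun x y hxy => ?_⟩
    simp only [patternTamper_apply_of_notMem hi, hxy i (mem_singleton_self i)]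

section Decoding

variable (C : CodingScheme n k)

theorem decDist_nonneg (f : Word n → Word n) (s : Msg k) (y : Option (Msg k)) :
    0 ≤ decDist C f s y :=
  sum_nonneg fun x _ => by split_ifs <;> simp [C.enc_nonneg]

theorem sum_decDist (f : Word n → Word n) (s : Msg k) : ∑ y, decDist C f s y = 1 := by
  simp only [decDist]
  rw [sum_comm]
  simp [C.enc_sum]

theorem decDist_le_one (f : Word n → Word n) (s : Msg k) (y : Option (Msg k)) :
    decDist C f s y ≤ 1 :=
  sum_decDist C f s ▸ single_le_sum (fun y _ => decDist_nonneg C f s y) (mem_univ y)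

theorem sum_decDist_some_le_one (f : Word n → Word n) (s : Msg k) :
    ∑ u, decDist C f s (some u) ≤ 1 := by
  have h := sum_decDist C f s
  rw [Fintype.sum_option] at h
  linarith [decDist_nonneg C f s none]

end Decoding

theorem copyDist_some_self (D : NMVal k → ℝ) (s : Msg k) :
    copyDist D s (some s) = D none + D (some (some s)) := by
  simp [copyDist, copyFn, Fintype.sum_option]

theorem copyDist_some_of_ne (D : NMVal k → ℝ) {s u : Msg k} (h : u ≠ s) :
    copyDist D s (some u) = D (some (some u)) := by
  simp [copyDist, copyFn, Fintype.sum_option, Ne.symm h]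

theorem decDist_self_le_of_statDist_le (C : CodingScheme n k) {f : Word n → Word n}
    {D : NMVal k → ℝ} {ε : ℝ} (hD : ∀ v, 0 ≤ D v)
    (h : ∀ s, statDist (decDist C f s) (copyDist D s) ≤ ε) {s₀ s₁ : Msg k} (hne : s₀ ≠ s₁) :
    decDist C f s₀ (some s₀) ≤ decDist C f s₁ (some s₁) + decDist C f s₁ (some s₀) + 6 * ε := by
  have close : ∀ s y, |decDist C f s y - copyDist D s y| ≤ 2 * ε := fun s y =>
    (abs_sub_le_two_mul_statDist _ _ y).trans (by linarith [h s])
  -- The simulator's mass on `same` is decoded as `s₀` from `Enc s₀` and as `s₁` from `Enc s₁`.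
  have h₀ := abs_le.1 (close s₀ (some s₀))
  have h₁ := abs_le.1 (close s₁ (some s₀))
  have h₂ := abs_le.1 (close s₁ (some s₁))
  rw [copyDist_some_self] at h₀ h₂
  rw [copyDist_some_of_ne D hne] at h₁
  linarith [hD (some (some s₁))]

noncomputable def maskedSupport (C : CodingScheme n k) (S : Finset (Fin n)) (s : Msg k) :
    Finset (Word n) :=
  (univ.filter fun x => 0 < C.enc s x).image (mask S)

section PatternTamper

variable (C : CodingScheme n k) (S : Finset (Fin n))

theorem decDist_patternTamper_maskedSupport_self (s : Msg k) :
    decDist C (patternTamper S (maskedSupport C S s)) s (some s) = 1 := by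
  rw [← C.enc_sum s]
  refine sum_congr rfl fun x _ => ?_
  rcases (C.enc_nonneg s x).eq_or_lt with h0 | hpos
  · simp [← h0]
  · have hx : mask S x ∈ maskedSupport C S s := mem_image_of_mem _ (by simpa using hpos)
    rw [patternTamper, if_pos hx, if_pos (C.dec_enc s x hpos)]

theorem decDist_patternTamper_of_ne (V : Finset (Word n)) {s u : Msg k} (hne : u ≠ s) :
    decDist C (patternTamper S V) s (some u) ≤ decDist C (mask Sᶜ) s (some u) := by
  refine sum_le_sum fun x _ => ?_
  rcases (C.enc_nonneg s x).eq_or_lt with h0 | hpos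
  · simp [← h0]
  · have hdec : C.dec x ≠ some u := by
      rw [C.dec_enc s x hpos, Ne, Option.some_inj]
      exact hne.symm
    by_cases hV : mask S x ∈ V
    · rw [patternTamper, if_pos hV, if_neg hdec]
      split_ifs <;> simp [C.enc_nonneg]
    · rw [patternTamper, if_neg hV]

theorem decDist_patternTamper_self_le (V : Finset (Word n)) (s : Msg k) :
    decDist C (patternTamper S V) s (some s) ≤
      ∑ x with mask S x ∈ V, C.enc s x + decDist C (mask Sᶜ) s (some s) := by
  rw [sum_filter, decDist, decDist, ← sum_add_distrib]
  refine sum_le_sum fun x _ => ?_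
  unfold patternTamper
  split_ifs <;> simp [C.enc_nonneg]

end PatternTamper

theorem sum_enc_mask_notMem_maskedSupport_le {δ ε : ℝ} (C : CodingScheme n k)
    (hNM : NonMalleable C (LocalFam n δ) ε) {S : Finset (Fin n)} (hS : #S ≤ ⌊δ * n⌋₊)
    (hδn : 1 ≤ ⌊δ * n⌋₊) {i s : Msg k} (hne : i ≠ s) :
    ∑ x with mask S x ∉ maskedSupport C S i, C.enc s x ≤
      decDist C (mask Sᶜ) s (some i) + decDist C (mask Sᶜ) s (some s) + 6 * ε := by
  set V := maskedSupport C S i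
  obtain ⟨D, hD, hclose⟩ := hNM _ (patternTamper_mem_localFam hS hδn V)
  have htransfer := decDist_self_le_of_statDist_le C hD.1 hclose hne
  rw [decDist_patternTamper_maskedSupport_self] at htransfer
  have hsplit := sum_filter_add_sum_filter_not univ (fun x => mask S x ∈ V) (C.enc s)
  rw [C.enc_sum] at hsplit
  linarith [decDist_patternTamper_of_ne C S V hne, decDist_patternTamper_self_le C S V s]

theorem card_filter_mem_maskedSupport_le (C : CodingScheme n k) (S : Finset (Fin n))
    (y : Word n) : #{s | y ∈ maskedSupport C S s} ≤ 2 ^ #Sᶜ := by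
  calc #{s | y ∈ maskedSupport C S s}
      = #((univ.filter fun s => y ∈ maskedSupport C S s).image some) :=
        (card_image_of_injective _ (Option.some_injective _)).symm
    _ ≤ #((univ.filter fun x => mask S x = y).image C.dec) := card_le_card ?_
    _ ≤ #(univ.filter fun x => mask S x = y) := card_image_le
    _ ≤ 2 ^ #Sᶜ := card_filter_mask_eq_le S y
  intro o ho
  obtain ⟨s, hs, rfl⟩ := mem_image.1 ho
  obtain ⟨x, hx, rfl⟩ := mem_image.1 (mem_filter.1 hs).2
  exact mem_image.2 ⟨x, by simp, C.dec_enc s x (by simpa using hx)⟩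

theorem sum_decDist_self_le_card_image (C : CodingScheme n k) (g : Word n → Word n) :
    ∑ s, decDist C g s (some s) ≤ #(univ.image g) := by
  set R := univ.image g
  have hfiber : ∀ s, decDist C g s (some s) ≤ #{z ∈ R | C.dec z = some s} := by
    intro s
    by_cases h : ∃ x, C.dec (g x) = some s
    · obtain ⟨x, hx⟩ := h
      have hpos : 0 < #{z ∈ R | C.dec z = some s} := card_pos.2 ⟨g x, by simp [R, hx]⟩
      exact (decDist_le_one C g s _).trans (by exact_mod_cast hpos)
    · push Not at h
      rw [decDist, sum_eq_zero fun x _ => if_neg (h x)]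
      positivity
  have hcount : ∑ s, #{z ∈ R | C.dec z = some s} ≤ #R := by
    rw [card_eq_sum_card_fiberwise (f := C.dec) (t := univ) fun _ _ => mem_univ _,
      Fintype.sum_option]
    exact Nat.le_add_left _ _
  calc ∑ s, decDist C g s (some s) ≤ ∑ s, (#{z ∈ R | C.dec z = some s} : ℝ) :=
        sum_le_sum fun s _ => hfiber s
    _ ≤ #R := by exact_mod_cast hcount

theorem exists_decDist_mask_compl_self_le (C : CodingScheme n k) (S : Finset (Fin n)) {N : ℝ}
    (hN : 0 < N) (hk : N * 2 ^ #Sᶜ ≤ 2 ^ k) : ∃ s, decDist C (mask Sᶜ) s (some s) ≤ 1 / N := by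
  obtain ⟨s, -, hs⟩ := exists_le_of_sum_le (univ_nonempty (α := Msg k)) (g := fun _ => 1 / N) <|
    calc ∑ s, decDist C (mask Sᶜ) s (some s) ≤ #(univ.image (mask Sᶜ)) :=
          sum_decDist_self_le_card_image C _
      _ ≤ (2 : ℝ) ^ #Sᶜ := by exact_mod_cast card_image_mask_le Sᶜ
      _ ≤ ∑ _s : Msg k, 1 / N := by
          rw [sum_const, card_univ, nsmul_eq_mul, ← div_eq_mul_one_div, le_div_iff₀ hN]
          simpa [mul_comm] using hk
  exact ⟨s, hs⟩

theorem exists_messages_without_common_pattern (C : CodingScheme n k) (S : Finset (Fin n))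
    (s : Msg k) {ℓ d : ℕ} (hk : k = #Sᶜ + d + 1) (hd : #S < d * ℓ) (hℓ : 9 * ℓ < 2 ^ d) :
    ∃ i : Fin ℓ → Msg k, (∀ j, i j ≠ s ∧ decDist C (mask Sᶜ) s (some (i j)) ≤ 1 / (9 * ℓ)) ∧
      ∀ x, ∃ j, mask S x ∉ maskedSupport C S (i j) := by
  have hℓ0 : (0 : ℝ) < 9 * ℓ := by
    have : 0 < ℓ := Nat.pos_of_ne_zero (by rintro rfl; simp at hd)
    positivity
  set G : Finset (Msg k) := {u | u ≠ s ∧ decDist C (mask Sᶜ) s (some u) ≤ 1 / (9 * ℓ)}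
  have hG : 2 ^ (#Sᶜ + d) ≤ #G := by
    have hcard := card_le_card_filter_ne_and_le_add (a := fun u => decDist C (mask Sᶜ) s (some u))
      (fun u => decDist_nonneg C _ s _) (sum_decDist_some_le_one C _ s) hℓ0 s
    simp only [Fintype.card_pi, prod_const, card_univ, Fintype.card_bool, Fintype.card_fin] at hcard
    change ((2 ^ k : ℕ) : ℝ) ≤ #G + 9 * ℓ + 1 at hcard
    have hcard' : 2 ^ k ≤ #G + 9 * ℓ + 1 := by exact_mod_cast hcard
    have h2k : 2 ^ k = 2 ^ (#Sᶜ + d) * 2 := by rw [hk, pow_succ]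
    have h2d : 2 ^ d ≤ 2 ^ (#Sᶜ + d) := Nat.pow_le_pow_right two_pos (Nat.le_add_left _ _)
    omega
  obtain ⟨i, hiG, hcover⟩ := exists_tuple_forall_exists_notMem (maskedSupport C S) G
    (univ.image (mask S)) (c := 2 ^ #Sᶜ)
    (fun y _ => (card_le_card (filter_subset_filter _ (subset_univ G))).trans
      (card_filter_mem_maskedSupport_le C S y))
    (calc #(univ.image (mask S)) * (2 ^ #Sᶜ) ^ ℓ ≤ 2 ^ #S * (2 ^ #Sᶜ) ^ ℓ :=
          Nat.mul_le_mul_right _ (card_image_mask_le S)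
      _ < 2 ^ (d * ℓ) * (2 ^ #Sᶜ) ^ ℓ :=
          Nat.mul_lt_mul_of_pos_right (Nat.pow_lt_pow_right one_lt_two hd) (by positivity)
      _ = (2 ^ (#Sᶜ + d)) ^ ℓ := by ring
      _ ≤ #G ^ ℓ := Nat.pow_le_pow_left hG ℓ)
  exact ⟨i, fun j => (mem_filter.1 (hiG j)).2, fun x => hcover _ (mem_image_of_mem _ (mem_univ x))⟩

theorem not_nonMalleable_localFam {δ ε : ℝ} {ℓ d : ℕ} (C : CodingScheme n k)
    {S : Finset (Fin n)} (hS : #S ≤ ⌊δ * n⌋₊) (hδn : 1 ≤ ⌊δ * n⌋₊)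
    (hk : k = #Sᶜ + d + 1) (hd : #S < d * ℓ) (hℓ : 9 * ℓ < 2 ^ d) (hε : ε ≤ 1 / (9 * ℓ)) :
    ¬ NonMalleable C (LocalFam n δ) ε := by
  intro hNM
  have hℓpos : (0 : ℝ) < ℓ := by
    have : 0 < ℓ := Nat.pos_of_ne_zero (by rintro rfl; simp at hd)
    positivity
  obtain ⟨s, hs⟩ := exists_decDist_mask_compl_self_le C S (by positivity : (0 : ℝ) < 9 * ℓ) <| by
    have h2d : (9 * ℓ + 1 : ℝ) ≤ 2 ^ d := by exact_mod_cast hℓ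
    rw [hk, pow_succ, pow_add]
    nlinarith [mul_le_mul_of_nonneg_left h2d (by positivity : (0 : ℝ) ≤ 2 ^ #Sᶜ),
      (by positivity : (0 : ℝ) ≤ ℓ * 2 ^ #Sᶜ)]
  obtain ⟨i, hi, hcover⟩ := exists_messages_without_common_pattern C S s hk hd hℓ
  have hunion : 1 ≤ ∑ j, ∑ x with mask S x ∉ maskedSupport C S (i j), C.enc s x :=
    C.enc_sum s ▸ sum_le_sum_sum_filter_of_forall_exists (C.enc_nonneg s) _ hcover
  have hleak : ∀ j, ∑ x with mask S x ∉ maskedSupport C S (i j), C.enc s x ≤ 8 / (9 * ℓ) := by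
    intro j
    refine (sum_enc_mask_notMem_maskedSupport_le C hNM hS hδn (hi j).1).trans ?_
    have : 8 / (9 * (ℓ : ℝ)) = 1 / (9 * ℓ) + 1 / (9 * ℓ) + 6 * (1 / (9 * ℓ)) := by ring
    linarith [(hi j).2]
  have : (1 : ℝ) ≤ 8 / 9 :=
    calc (1 : ℝ) ≤ ∑ _j : Fin ℓ, (8 : ℝ) / (9 * ℓ) := hunion.trans (sum_le_sum fun j _ => hleak j)
      _ = 8 / 9 := by
        rw [sum_const, card_univ, Fintype.card_fin, nsmul_eq_mul]
        field_simp [hℓpos.ne']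
  norm_num at this

end Tampering

theorem exists_rate_parameters {δ γ : ℝ} (hδ0 : 0 < δ) (hδ1 : δ < 1) (hγ : 0 < γ) :
    ∃ ℓ : ℕ, 0 < ℓ ∧ ∃ n₀ : ℕ, ∀ n ≥ n₀, ∀ k : ℕ, 1 - δ + γ < k / n →
      1 ≤ ⌊δ * n⌋₊ ∧ ⌊δ * n⌋₊ ≤ n ∧
        ∃ d, k = n - ⌊δ * n⌋₊ + d + 1 ∧ ⌊δ * n⌋₊ < d * ℓ ∧ 9 * ℓ < 2 ^ d := by
  set ℓ := ⌈2 / γ⌉₊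
  have hℓ : 0 < ℓ := Nat.ceil_pos.2 (by positivity)
  have hℓγ : 2 ≤ ℓ * γ := (div_le_iff₀ hγ).1 (Nat.le_ceil _)
  refine ⟨ℓ, hℓ, ⌈1 / δ⌉₊ + 2 * ℓ + ⌈(9 * ℓ + 2) / γ⌉₊, fun n hn k hk => ?_⟩
  have hnℓ : (2 * ℓ : ℝ) ≤ n := by exact_mod_cast (show 2 * ℓ ≤ n by omega)
  have hnδ : 1 ≤ δ * n := by
    have : ⌈1 / δ⌉₊ ≤ n := by omega
    exact (div_le_iff₀' hδ0).1 ((Nat.le_ceil _).trans (by exact_mod_cast this))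
  have hnγ : 9 * ℓ + 2 ≤ γ * n := by
    have : ⌈(9 * (ℓ : ℝ) + 2) / γ⌉₊ ≤ n := by omega
    exact (div_le_iff₀' hγ).1 ((Nat.le_ceil _).trans (by exact_mod_cast this))
  have hn0 : (0 : ℝ) < n := by
    have : (0 : ℝ) < ℓ := by exact_mod_cast hℓ
    linarith
  rw [lt_div_iff₀ hn0] at hk
  set m := ⌊δ * n⌋₊
  have hm_le : (m : ℝ) ≤ δ * n := Nat.floor_le (by positivity)
  have hm_gt : δ * n < m + 1 := Nat.lt_floor_add_one _
  have hmn : m ≤ n := by exact_mod_cast (show (m : ℝ) ≤ n by nlinarith)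
  have hkm : n - m + 1 < k := by
    have : ((n - m + 1 : ℕ) : ℝ) < k := by push_cast [Nat.cast_sub hmn]; nlinarith
    exact_mod_cast this
  have hd : γ * n - 2 < ((k - (n - m) - 1 : ℕ) : ℝ) := by
    rw [Nat.cast_sub (by omega), Nat.cast_sub (by omega), Nat.cast_sub hmn]
    push_cast
    nlinarith
  -- `d > γn - 2`: `ℓγ ≥ 2` and `n ≥ 2ℓ` give `dℓ > n ≥ ⌊δn⌋`, and `γn ≥ 9ℓ + 2` gives `d > 9ℓ`.
  refine ⟨Nat.le_floor (by exact_mod_cast hnδ), hmn, k - (n - m) - 1, by omega, ?_, ?_⟩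
  · have : (m : ℝ) < (k - (n - m) - 1 : ℕ) * ℓ := by nlinarith
    exact_mod_cast this
  · have : (9 * ℓ : ℝ) < (k - (n - m) - 1 : ℕ) := by linarith
    exact (show 9 * ℓ < k - (n - m) - 1 by exact_mod_cast this).trans Nat.lt_two_pow_self

/-- Fix `δ ∈ (0,1)`. For every constant `γ > 0` there exist
`ε₀ > 0` and `n₀` such that for all `n ≥ n₀`: any coding scheme with block length
`n` that is non-malleable w.r.t. `F_δ` with error `ε ≤ ε₀` has rate at most
`1 − δ + γ`. -/
theorem local_tampering_capacity_upper_bound :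
    ∀ δ : ℝ, 0 < δ → δ < 1 →
    ∀ γ : ℝ, 0 < γ →
    ∃ ε₀ : ℝ, 0 < ε₀ ∧ ∃ n₀ : ℕ, ∀ n : ℕ, n₀ ≤ n →
    ∀ k : ℕ, ∀ Cs : CodingScheme n k, ∀ ε : ℝ, 0 ≤ ε → ε ≤ ε₀ →
      NonMalleable Cs (LocalFam n δ) ε →
      (k : ℝ) / (n : ℝ) ≤ 1 - δ + γ := by
  intro δ hδ0 hδ1 γ hγ
  obtain ⟨ℓ, hℓ, n₀, hparams⟩ := exists_rate_parameters hδ0 hδ1 hγ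
  refine ⟨1 / (9 * ℓ), by positivity, n₀, fun n hn k C ε _ hε hNM => ?_⟩
  by_contra! hrate
  obtain ⟨hδn, hmn, d, hk, hd, hℓd⟩ := hparams n hn k hrate
  obtain ⟨S, -, hS⟩ := exists_subset_card_eq (s := (univ : Finset (Fin n))) (by simpa using hmn)
  refine not_nonMalleable_localFam C hS.le hδn ?_ (hS ▸ hd) hℓd hε hNM
  rw [card_compl, Fintype.card_fin, hS, hk]
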